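/- The 20 rooted trees of order 6 fall into 15 isomeric classes: 11 singletons, three classes of size 2, and one class of size 3; in particular the number of isomeric classes of order-6 rooted trees is 15. -/

import Mathlib

/-- Unordered rooted trees, represented as planar trees (lists of subtrees);
unordered identification is via the isomorphism relation `RTree.Iso`. -/
inductive RTree where
  | node : List RTree → RTree

namespace RTree

/-- The single-vertex tree τ. -/
def leaf : RTree := .node []

def isLeaf : RTree → Bool
  | .node [] => true
  | _ => false

/-- The order |t|: number of vertices. -/
def order : RTree → ℕ
  | .node l => 1 + (l.attach.map (fun t => order t.1)).sum
decreasing_by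
  have := List.sizeOf_lt_of_mem t.2
  simp only [RTree.node.sizeOf_spec]
  omega

/-- Isomorphism of planar rooted trees: the lists of children agree up to
permutation and recursive isomorphism. -/
inductive Iso : RTree → RTree → Prop
  | node {l₁ l₂ : List RTree} (l : List RTree) :
      List.Perm l₁ l → List.Forall₂ Iso l l₂ → Iso (.node l₁) (.node l₂)

end RTree

namespace RTree

/-- The multiset of atomic stumps of a tree: for each internal vertex we record
the pair (number of leaf children, number of non-leaf children). -/
def stumps : RTree → Multiset (ℕ × ℕ)
  | .node l =>
      (l.countP isLeaf, l.countP (fun t => !isLeaf t)) ::ₘ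
        (l.attach.map (fun t => if isLeaf t.1 then (0 : Multiset (ℕ × ℕ)) else stumps t.1)).sum
decreasing_by
  have := List.sizeOf_lt_of_mem t.2
  simp only [RTree.node.sizeOf_spec]
  omega

end RTree

namespace RTree

theorem order_node (l : List RTree) : order (node l) = 1 + (l.map order).sum := by
  rw [order, List.attach_map_val]

theorem stumps_node (l : List RTree) :
    stumps (node l) = (l.countP isLeaf, l.countP (fun t => !isLeaf t)) ::ₘ
        (l.map (fun t => if isLeaf t then (0 : Multiset (ℕ × ℕ)) else stumps t)).sum := by
  rw [stumps, List.attach_map_val (l := l) (f := fun x => if isLeaf x then (0 : Multiset (ℕ × ℕ)) else stumps x)]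

theorem order_pos (t : RTree) : 1 ≤ order t := by
  cases t with
  | node l => rw [order_node]; omega

theorem sizeOf_lt_of_mem_children {x : RTree} {l : List RTree} (h : x ∈ l) :
    sizeOf x < sizeOf (node l) := by
  have := List.sizeOf_lt_of_mem h
  simp only [RTree.node.sizeOf_spec]
  omega

/-! ### Basic properties of `Iso` -/

private theorem order_eq_aux :
    ∀ (n : ℕ) (t₁ t₂ : RTree), sizeOf t₁ < n → Iso t₁ t₂ → order t₁ = order t₂ := by
  intro n
  induction n with
  | zero => intro t₁ t₂ h; exact absurd h (Nat.not_lt_zero _)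
  | succ n ih =>
    intro t₁ t₂ hs h
    cases h with
    | @node l₁ l₂ l hp hf =>
      have hmem : ∀ x ∈ l, sizeOf x < n := by
        intro x hx
        have hx1 : x ∈ l₁ := hp.symm.subset hx
        have := sizeOf_lt_of_mem_children hx1
        omega
      have key : ∀ (a b : List RTree), List.Forall₂ Iso a b → (∀ x ∈ a, sizeOf x < n) →
          a.map order = b.map order := by
        intro a b hab
        induction hab with
        | nil => intro _; rfl
        | @cons x y a' b' hxy _ ih2 =>
          intro hm
          simp only [List.map_cons]
          rw [ih _ _ (hm x (List.mem_cons_self)) hxy,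
            ih2 (fun z hz => hm z (List.mem_cons_of_mem _ hz))]
      rw [order_node, order_node, ← key l l₂ hf hmem, (hp.map order).sum_eq]

theorem Iso.order_eq {t₁ t₂ : RTree} (h : Iso t₁ t₂) : order t₁ = order t₂ :=
  order_eq_aux (sizeOf t₁ + 1) t₁ t₂ (Nat.lt_succ_self _) h

private theorem iso_refl_aux : ∀ (n : ℕ) (t : RTree), sizeOf t < n → Iso t t := by
  intro n
  induction n with
  | zero => intro t h; exact absurd h (Nat.not_lt_zero _)
  | succ n ih =>
    intro t hs
    cases t with
    | node l =>
      refine Iso.node l (List.Perm.refl _) (List.forall₂_same.2 fun x hx => ?_)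
      have := sizeOf_lt_of_mem_children hx
      exact ih x (by omega)

theorem Iso.refl (t : RTree) : Iso t t := iso_refl_aux (sizeOf t + 1) t (Nat.lt_succ_self _)

private theorem iso_symm_aux :
    ∀ (n : ℕ) (t₁ t₂ : RTree), sizeOf t₁ < n → Iso t₁ t₂ → Iso t₂ t₁ := by
  intro n
  induction n with
  | zero => intro t₁ t₂ h; exact absurd h (Nat.not_lt_zero _)
  | succ n ih =>
    intro t₁ t₂ hs h
    cases h with
    | @node l₁ l₂ l hp hf =>
      have hmem : ∀ x ∈ l, sizeOf x < n := by
        intro x hx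
        have := sizeOf_lt_of_mem_children (hp.symm.subset hx)
        omega
      have key : ∀ (a b : List RTree), List.Forall₂ Iso a b → (∀ x ∈ a, sizeOf x < n) →
          List.Forall₂ Iso b a := by
        intro a b hab
        induction hab with
        | nil => intro _; exact List.Forall₂.nil
        | @cons x y a' b' hxy _ ih2 =>
          intro hm
          exact List.Forall₂.cons (ih _ _ (hm x (List.mem_cons_self)) hxy)
            (ih2 fun z hz => hm z (List.mem_cons_of_mem _ hz))
      have h1 : List.Forall₂ Iso l₂ l := key l l₂ hf hmem
      -- compose Forall₂ l₂ l with Perm l l₁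
      have h2 : (Relation.Comp (List.Forall₂ Iso) List.Perm) l₂ l₁ := ⟨l, h1, hp.symm⟩
      rw [List.forall₂_comp_perm_eq_perm_comp_forall₂] at h2
      obtain ⟨l', hperm', hf'⟩ := h2
      exact Iso.node l' hperm' hf'

theorem Iso.symm {t₁ t₂ : RTree} (h : Iso t₁ t₂) : Iso t₂ t₁ :=
  iso_symm_aux (sizeOf t₁ + 1) t₁ t₂ (Nat.lt_succ_self _) h

private theorem iso_trans_aux :
    ∀ (n : ℕ) (t₁ t₂ t₃ : RTree), sizeOf t₂ < n → Iso t₁ t₂ → Iso t₂ t₃ → Iso t₁ t₃ := by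
  intro n
  induction n with
  | zero => intro t₁ t₂ t₃ h; exact absurd h (Nat.not_lt_zero _)
  | succ n ih =>
    intro t₁ t₂ t₃ hs h12 h23
    cases h12 with
    | @node l₁ l₂ a hp1 hf1 =>
      cases h23 with
      | @node _ l₃ b hp2 hf2 =>
        have hcomp : (Relation.Comp (List.Forall₂ Iso) List.Perm) l₂ l₃ :=
          List.perm_comp_forall₂ hp2 hf2
        obtain ⟨c, hf2', hpc⟩ := hcomp
        have hmem : ∀ x ∈ l₂, sizeOf x < n := by
          intro x hx
          have := sizeOf_lt_of_mem_children hx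
          omega
        have key : ∀ (x y z : List RTree), List.Forall₂ Iso x y → List.Forall₂ Iso y z →
            (∀ e ∈ y, sizeOf e < n) → List.Forall₂ Iso x z := by
          intro x y z hxy
          induction hxy generalizing z with
          | nil =>
            intro hyz _
            cases hyz
            exact List.Forall₂.nil
          | @cons p q x' y' hpq _ ih2 =>
            intro hyz hm
            cases hyz with
            | cons hqr hrest =>
              exact List.Forall₂.cons
                (ih _ _ _ (hm q (List.mem_cons_self)) hpq hqr)
                (ih2 _ hrest fun e he => hm e (List.mem_cons_of_mem _ he))
        have hac : List.Forall₂ Iso a c := key a l₂ c hf1 hf2' hmem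
        have h2 : (Relation.Comp (List.Forall₂ Iso) List.Perm) a l₃ := ⟨c, hac, hpc⟩
        rw [List.forall₂_comp_perm_eq_perm_comp_forall₂] at h2
        obtain ⟨d, hpd, hfd⟩ := h2
        exact Iso.node d (hp1.trans hpd) hfd

theorem Iso.trans {t₁ t₂ t₃ : RTree} (h12 : Iso t₁ t₂) (h23 : Iso t₂ t₃) : Iso t₁ t₃ :=
  iso_trans_aux (sizeOf t₂ + 1) t₁ t₂ t₃ (Nat.lt_succ_self _) h12 h23

theorem iso_of_perm {m₁ m₂ : List RTree} (h : m₁.Perm m₂) : Iso (node m₁) (node m₂) :=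
  Iso.node m₂ h (List.forall₂_same.2 fun x _ => Iso.refl x)

theorem iso_node_of_forall₂ {m₁ m₂ : List RTree} (h : List.Forall₂ Iso m₁ m₂) :
    Iso (node m₁) (node m₂) :=
  Iso.node m₁ (List.Perm.refl _) h

theorem map_order_eq_of_forall₂ {a b : List RTree} (h : List.Forall₂ Iso a b) :
    a.map order = b.map order := by
  induction h with
  | nil => rfl
  | cons hxy _ ih => simp only [List.map_cons]; rw [hxy.order_eq, ih]

theorem perm_of_iso_node {C : List RTree} (rig : ∀ x ∈ C, ∀ y ∈ C, Iso x y → x = y)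
    {m₁ m₂ : List RTree} (h₁ : ∀ c ∈ m₁, c ∈ C) (h₂ : ∀ c ∈ m₂, c ∈ C)
    (h : Iso (node m₁) (node m₂)) : m₁.Perm m₂ := by
  cases h with
  | @node _ _ l hp hf =>
    have hl : ∀ c ∈ l, c ∈ C := fun c hc => h₁ c (hp.symm.subset hc)
    have key : ∀ (a b : List RTree), List.Forall₂ Iso a b → (∀ c ∈ a, c ∈ C) →
        (∀ c ∈ b, c ∈ C) → a = b := by
      intro a b hab
      induction hab with
      | nil => intro _ _; rfl
      | @cons x y a' b' hxy _ ih2 =>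
        intro ha hb
        rw [rig x (ha x (List.mem_cons_self)) y (hb y (List.mem_cons_self)) hxy,
          ih2 (fun c hc => ha c (List.mem_cons_of_mem _ hc))
            (fun c hc => hb c (List.mem_cons_of_mem _ hc))]
    exact (key l m₂ hf hl h₂) ▸ hp

/-! ### Enumeration -/

/-- All lists (canonical, i.e. respecting the order of `C`) of trees drawn from the
weighted candidate list `C`, with total weight `n`. -/
def combos : ℕ → List (RTree × ℕ) → ℕ → List (List RTree)
  | _, _, 0 => [[]]
  | 0, _, _ + 1 => []
  | _ + 1, [], _ + 1 => []
  | fuel + 1, (c, w) :: cs, n + 1 =>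
      (if 1 ≤ w ∧ w ≤ n + 1 then (combos fuel ((c, w) :: cs) (n + 1 - w)).map (c :: ·)
       else []) ++ combos fuel cs (n + 1)

def C5 : List (RTree × ℕ) := [
  (.node [], 1),
  (.node [.node []], 2),
  (.node [.node [], .node []], 3),
  (.node [.node [.node []]], 3),
  (.node [.node [], .node [], .node []], 4),
  (.node [.node [], .node [.node []]], 4),
  (.node [.node [.node [], .node []]], 4),
  (.node [.node [.node [.node []]]], 4),
  (.node [.node [], .node [], .node [], .node []], 5),
  (.node [.node [], .node [], .node [.node []]], 5),
  (.node [.node [], .node [.node [], .node []]], 5),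
  (.node [.node [], .node [.node [.node []]]], 5),
  (.node [.node [.node []], .node [.node []]], 5),
  (.node [.node [.node [], .node [], .node []]], 5),
  (.node [.node [.node [], .node [.node []]]], 5),
  (.node [.node [.node [.node [], .node []]]], 5),
  (.node [.node [.node [.node [.node []]]]], 5)]

/-- A code distinguishing the 17 trees of order at most 5. -/
def fcode : RTree → ℕ := fun t => match t with
  | .node [] => 1
  | .node [.node []] => 2
  | .node [.node [], .node []] => 3
  | .node [.node [.node []]] => 4
  | .node [.node [], .node [], .node []] => 5
  | .node [.node [], .node [.node []]] => 6
  | .node [.node [.node [], .node []]] => 7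
  | .node [.node [.node [.node []]]] => 8
  | .node [.node [], .node [], .node [], .node []] => 9
  | .node [.node [], .node [], .node [.node []]] => 10
  | .node [.node [], .node [.node [], .node []]] => 11
  | .node [.node [], .node [.node [.node []]]] => 12
  | .node [.node [.node []], .node [.node []]] => 13
  | .node [.node [.node [], .node [], .node []]] => 14
  | .node [.node [.node [], .node [.node []]]] => 15
  | .node [.node [.node [.node [], .node []]]] => 16
  | .node [.node [.node [.node [.node []]]]] => 17
  | _ => 0

/-- Canonical representatives of rooted trees of order `n`, for `1 ≤ n ≤ 6`. -/
def LL (n : ℕ) : List RTree := (combos 30 C5 (n - 1)).map node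

theorem combos_mem : ∀ (fuel : ℕ) (C : List (RTree × ℕ)) (n : ℕ) (m : List RTree),
    m ∈ combos fuel C n → ∀ c ∈ m, ∃ w, (c, w) ∈ C ∧ 1 ≤ w ∧ w ≤ n := by
  intro fuel
  induction fuel with
  | zero =>
    intro C n m hm
    match n, hm with
    | 0, hm =>
      rw [combos] at hm
      simp only [List.mem_singleton] at hm
      subst hm
      intro c hc
      exact absurd hc (List.not_mem_nil)
  | succ fuel ih =>
    intro C n m hm
    match C, n, hm with
    | C, 0, hm =>
      rw [combos] at hm
      simp only [List.mem_singleton] at hm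
      subst hm
      intro c hc
      exact absurd hc (List.not_mem_nil)
    | [], n + 1, hm =>
      rw [combos] at hm
      exact absurd hm (List.not_mem_nil)
    | (c, w) :: cs, n + 1, hm =>
      rw [combos] at hm
      rcases List.mem_append.1 hm with h | h
      · split at h
        case isTrue hcond =>
          obtain ⟨m', hm', rfl⟩ := List.mem_map.1 h
          intro x hx
          rcases List.mem_cons.1 hx with rfl | hx'
          · exact ⟨w, List.mem_cons_self, hcond.1, hcond.2⟩
          · obtain ⟨w', hw', h1, h2⟩ := ih _ _ _ hm' x hx'
            exact ⟨w', hw', h1, by omega⟩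
        case isFalse => exact absurd h (List.not_mem_nil)
      · intro x hx
        obtain ⟨w', hw', h1, h2⟩ := ih _ _ _ h x hx
        exact ⟨w', List.mem_cons_of_mem _ hw', h1, h2⟩

theorem combos_sum : ∀ (fuel : ℕ) (C : List (RTree × ℕ)) (n : ℕ) (m : List RTree),
    (∀ p ∈ C, order p.1 = p.2) → m ∈ combos fuel C n → (m.map order).sum = n := by
  intro fuel
  induction fuel with
  | zero =>
    intro C n m _ hm
    match n, hm with
    | 0, hm =>
      rw [combos] at hm
      simp only [List.mem_singleton] at hm
      subst hm
      rfl
  | succ fuel ih =>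
    intro C n m hw hm
    match C, n, hm with
    | C, 0, hm =>
      rw [combos] at hm
      simp only [List.mem_singleton] at hm
      subst hm
      rfl
    | [], n + 1, hm =>
      rw [combos] at hm
      exact absurd hm (List.not_mem_nil)
    | (c, w) :: cs, n + 1, hm =>
      rw [combos] at hm
      rcases List.mem_append.1 hm with h | h
      · split at h
        case isTrue hcond =>
          obtain ⟨m', hm', rfl⟩ := List.mem_map.1 h
          have hs := ih _ _ _ hw hm'
          have hc : order c = w := hw (c, w) (List.mem_cons_self)
          simp only [List.map_cons, List.sum_cons, hs, hc]
          omega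
        case isFalse => exact absurd h (List.not_mem_nil)
      · exact ih _ _ _ (fun p hp => hw p (List.mem_cons_of_mem _ hp)) h

theorem combos_complete : ∀ (fuel : ℕ) (C : List (RTree × ℕ)) (n : ℕ) (m : List RTree),
    n + C.length ≤ fuel →
    (∀ p ∈ C, order p.1 = p.2) →
    (∀ x ∈ m, ∃ w, (x, w) ∈ C) →
    (m.map order).sum = n →
    ∃ m' ∈ combos fuel C n, m.Perm m' := by
  intro fuel
  induction fuel with
  | zero =>
    intro C n m hfuel hw hmem hsum
    have hn : n = 0 := by omega
    subst hn
    have hm : m = [] := by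
      cases m with
      | nil => rfl
      | cons x xs =>
        exfalso
        have h1 : 1 ≤ order x := order_pos x
        simp only [List.map_cons, List.sum_cons] at hsum
        omega
    subst hm
    exact ⟨[], by rw [combos]; exact List.mem_singleton.2 rfl, List.Perm.refl _⟩
  | succ fuel ih =>
    intro C n m hfuel hw hmem hsum
    match n with
    | 0 =>
      have hm : m = [] := by
        cases m with
        | nil => rfl
        | cons x xs =>
          exfalso
          have h1 : 1 ≤ order x := order_pos x
          simp only [List.map_cons, List.sum_cons] at hsum
          omega
      subst hm
      exact ⟨[], by rw [combos]; exact List.mem_singleton.2 rfl, List.Perm.refl _⟩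
    | n + 1 =>
      match C with
      | [] =>
        exfalso
        cases m with
        | nil => simp at hsum
        | cons x xs =>
          obtain ⟨w, hw'⟩ := hmem x (List.mem_cons_self)
          exact List.not_mem_nil hw'
      | (c, w) :: cs =>
        by_cases hc : c ∈ m
        · -- use head element
          obtain ⟨s, t, rfl⟩ := List.append_of_mem hc
          have hperm : (s ++ c :: t).Perm (c :: (s ++ t)) := List.perm_middle
          have hcw : order c = w := hw (c, w) (List.mem_cons_self)
          have hwpos : 1 ≤ w := by
            have := order_pos c
            omega
          have hsum2 : ((s ++ t).map order).sum = n + 1 - w := by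
            have := hperm.map order |>.sum_eq
            simp only [List.map_cons, List.sum_cons] at this
            rw [hsum] at this
            omega
          have hwle : w ≤ n + 1 := by
            have := hperm.map order |>.sum_eq
            simp only [List.map_cons, List.sum_cons] at this
            rw [hsum] at this
            omega
          obtain ⟨m', hm', hperm'⟩ := ih ((c, w) :: cs) (n + 1 - w) (s ++ t)
            (by simp only [List.length_cons] at hfuel ⊢; omega) hw
            (fun x hx => hmem x (by
              rcases List.mem_append.1 hx with h | h
              · exact List.mem_append.2 (Or.inl h)
              · exact List.mem_append.2 (Or.inr (List.mem_cons_of_mem _ h))))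
            hsum2
          refine ⟨c :: m', ?_, hperm.trans (hperm'.cons c)⟩
          rw [combos]
          refine List.mem_append.2 (Or.inl ?_)
          rw [if_pos ⟨hwpos, hwle⟩]
          exact List.mem_map.2 ⟨m', hm', rfl⟩
        · -- head element unused
          obtain ⟨m', hm', hperm'⟩ := ih cs (n + 1) m
            (by simp only [List.length_cons] at hfuel ⊢; omega) 
            (fun p hp => hw p (List.mem_cons_of_mem _ hp))
            (fun x hx => by
              obtain ⟨w', hw'⟩ := hmem x hx
              rcases List.mem_cons.1 hw' with heq | h
              · exfalso; apply hc
                have : x = c := by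
                  have := congrArg Prod.fst heq
                  simpa using this
                exact this ▸ hx
              · exact ⟨w', h⟩)
            hsum
          refine ⟨m', ?_, hperm'⟩
          rw [combos]
          exact List.mem_append.2 (Or.inr hm')


/-- Union of the canonical lists of levels `1..k`. -/
def CU : ℕ → List RTree
  | 0 => []
  | k + 1 => CU k ++ LL (k + 1)

theorem hwC5 : ∀ p ∈ C5, order p.1 = p.2 := by
  intro p hp
  fin_cases hp <;> simp [order_node]

theorem C5_length : C5.length = 17 := rfl

theorem eLL1 : LL 1 = [.node []] := rfl
theorem eLL2 : LL 2 = [.node [.node []]] := rfl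
theorem eLL3 : LL 3 = [.node [.node [], .node []], .node [.node [.node []]]] := rfl
theorem eLL4 : LL 4 = [.node [.node [], .node [], .node []], .node [.node [], .node [.node []]], .node [.node [.node [], .node []]], .node [.node [.node [.node []]]]] := rfl
theorem eLL5 : LL 5 = [.node [.node [], .node [], .node [], .node []], .node [.node [], .node [], .node [.node []]], .node [.node [], .node [.node [], .node []]], .node [.node [], .node [.node [.node []]]], .node [.node [.node []], .node [.node []]], .node [.node [.node [], .node [], .node []]], .node [.node [.node [], .node [.node []]]], .node [.node [.node [.node [], .node []]]], .node [.node [.node [.node [.node []]]]]] := rfl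

theorem mem_C5_of_LL {x : RTree} {k : ℕ} (h1 : 1 ≤ k) (h5 : k ≤ 5) (hx : x ∈ LL k) :
    (x, k) ∈ C5 := by
  interval_cases k
  · rw [eLL1] at hx; fin_cases hx <;> simp [C5]
  · rw [eLL2] at hx; fin_cases hx <;> simp [C5]
  · rw [eLL3] at hx; fin_cases hx <;> simp [C5]
  · rw [eLL4] at hx; fin_cases hx <;> simp [C5]
  · rw [eLL5] at hx; fin_cases hx <;> simp [C5]

theorem mem_LL_of_C5 {x : RTree} {w : ℕ} (h : (x, w) ∈ C5) : x ∈ LL w := by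
  fin_cases h <;> simp [eLL1, eLL2, eLL3, eLL4, eLL5]

theorem mem_CU_of_LL {x : RTree} {w j : ℕ} (h1 : 1 ≤ w) (hj : w ≤ j) (hx : x ∈ LL w) :
    x ∈ CU j := by
  induction j with
  | zero => omega
  | succ j ihj =>
    rw [CU]
    rcases Nat.lt_or_ge w (j + 1) with hlt | hge
    · exact List.mem_append.2 (Or.inl (ihj (by omega)))
    · have : w = j + 1 := by omega
      subst this
      exact List.mem_append.2 (Or.inr hx)

theorem ordLL {k : ℕ} (hk : 1 ≤ k) : ∀ t ∈ LL k, order t = k := by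
  intro t ht
  rw [LL] at ht
  obtain ⟨m, hm, rfl⟩ := List.mem_map.1 ht
  rw [order_node, combos_sum 30 C5 (k - 1) m hwC5 hm]
  omega

theorem ordCU : ∀ j, ∀ t ∈ CU j, 1 ≤ order t ∧ order t ≤ j := by
  intro j
  induction j with
  | zero => intro t ht; exact absurd ht (List.not_mem_nil)
  | succ j ihj =>
    intro t ht
    rcases List.mem_append.1 ht with h | h
    · have := ihj t h; omega
    · have := ordLL (by omega) t h
      have := order_pos t
      omega

/-- A list of trees is *rigid* if isomorphic members are equal. -/
def Rig (C : List RTree) : Prop := ∀ x ∈ C, ∀ y ∈ C, Iso x y → x = y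

theorem eq_of_pairwise_noniso {L : List RTree}
    (hpw : L.Pairwise (fun a b => ¬ Iso a b)) {x y : RTree}
    (hx : x ∈ L) (hy : y ∈ L) (h : Iso x y) : x = y := by
  by_contra hne
  have hsym : Symmetric (fun a b : RTree => ¬ Iso a b) := fun a b hab h' => hab h'.symm
  haveI : Std.Symm (fun a b : RTree => ¬ Iso a b) := ⟨fun a b h => hsym h⟩
  exact (hpw.forall hx hy hne) h

theorem level_pairwise {C : List RTree} (rig : Rig C)
    (L : List (List RTree)) (hmem : ∀ m ∈ L, ∀ c ∈ m, c ∈ C)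
    (hcodes : (L.map (fun m => m.map fcode)).Pairwise (fun a b => ¬ a.Perm b)) :
    (L.map node).Pairwise (fun a b => ¬ Iso a b) := by
  rw [List.pairwise_map] at hcodes ⊢
  refine List.Pairwise.imp_of_mem ?_ hcodes
  intro m₁ m₂ h₁ h₂ hnp hiso
  exact hnp ((perm_of_iso_node rig (hmem m₁ h₁) (hmem m₂ h₂) hiso).map fcode)

theorem LL_mem_CU {k : ℕ} : ∀ m ∈ combos 30 C5 k, ∀ c ∈ m, c ∈ CU k := by
  intro m hm c hc
  obtain ⟨w, hwC, h1, h2⟩ := combos_mem _ _ _ _ hm c hc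
  exact mem_CU_of_LL h1 h2 (mem_LL_of_C5 hwC)

theorem LL_pairwise {k : ℕ} (hk : 1 ≤ k) (rig : Rig (CU (k - 1)))
    (hcodes : ((combos 30 C5 (k - 1)).map (fun m => m.map fcode)).Pairwise
      (fun a b => ¬ a.Perm b)) :
    (LL k).Pairwise (fun a b => ¬ Iso a b) :=
  level_pairwise rig _ LL_mem_CU hcodes

theorem rig_step {k : ℕ} (rig : Rig (CU k))
    (hpw : (LL (k + 1)).Pairwise (fun a b => ¬ Iso a b)) : Rig (CU (k + 1)) := by
  intro x hx y hy h
  rw [CU] at hx hy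
  rcases List.mem_append.1 hx with hx | hx <;> rcases List.mem_append.1 hy with hy | hy
  · exact rig x hx y hy h
  · exfalso
    have h1 := ordCU k x hx
    have h2 := ordLL (by omega) y hy
    have := h.order_eq
    omega
  · exfalso
    have h1 := ordCU k y hy
    have h2 := ordLL (by omega) x hx
    have := h.order_eq
    omega
  · exact eq_of_pairwise_noniso hpw hx hy h

theorem rig0 : Rig (CU 0) := fun x hx => absurd hx (List.not_mem_nil)

theorem rig5 : Rig (CU 5) :=
  rig_step (rig_step (rig_step (rig_step (rig_step rig0
    (LL_pairwise (by norm_num) rig0 (by decide)))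
    (LL_pairwise (by norm_num) (rig_step rig0 (LL_pairwise (by norm_num) rig0 (by decide))) (by decide)))
    (LL_pairwise (by norm_num) (rig_step (rig_step rig0 (LL_pairwise (by norm_num) rig0 (by decide))) (LL_pairwise (by norm_num) (rig_step rig0 (LL_pairwise (by norm_num) rig0 (by decide))) (by decide))) (by decide)))
    (LL_pairwise (by norm_num) (rig_step (rig_step (rig_step rig0
      (LL_pairwise (by norm_num) rig0 (by decide)))
      (LL_pairwise (by norm_num) (rig_step rig0 (LL_pairwise (by norm_num) rig0 (by decide))) (by decide)))
      (LL_pairwise (by norm_num) (rig_step (rig_step rig0 (LL_pairwise (by norm_num) rig0 (by decide))) (LL_pairwise (by norm_num) (rig_step rig0 (LL_pairwise (by norm_num) rig0 (by decide))) (by decide))) (by decide))) (by decide)))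
    (LL_pairwise (by norm_num) (rig_step (rig_step (rig_step (rig_step rig0
      (LL_pairwise (by norm_num) rig0 (by decide)))
      (LL_pairwise (by norm_num) (rig_step rig0 (LL_pairwise (by norm_num) rig0 (by decide))) (by decide)))
      (LL_pairwise (by norm_num) (rig_step (rig_step rig0 (LL_pairwise (by norm_num) rig0 (by decide))) (LL_pairwise (by norm_num) (rig_step rig0 (LL_pairwise (by norm_num) rig0 (by decide))) (by decide))) (by decide)))
      (LL_pairwise (by norm_num) (rig_step (rig_step (rig_step rig0
        (LL_pairwise (by norm_num) rig0 (by decide)))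
        (LL_pairwise (by norm_num) (rig_step rig0 (LL_pairwise (by norm_num) rig0 (by decide))) (by decide)))
        (LL_pairwise (by norm_num) (rig_step (rig_step rig0 (LL_pairwise (by norm_num) rig0 (by decide))) (LL_pairwise (by norm_num) (rig_step rig0 (LL_pairwise (by norm_num) rig0 (by decide))) (by decide))) (by decide))) (by decide))) (by decide))

theorem pw6 : (LL 6).Pairwise (fun a b => ¬ Iso a b) :=
  LL_pairwise (by norm_num) rig5 (by decide)


private theorem complete_aux :
    ∀ (n : ℕ) (t : RTree), sizeOf t < n → order t ≤ 6 → ∃ r ∈ LL (order t), Iso t r := by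
  intro n
  induction n with
  | zero => intro t _ h; exact absurd ‹sizeOf t < 0› (Nat.not_lt_zero _)
  | succ n ih =>
    intro t hs h6
    cases t with
    | node l =>
      have hl : ∀ c ∈ l, sizeOf c < n ∧ order c ≤ 5 := by
        intro c hc
        constructor
        · have := sizeOf_lt_of_mem_children hc
          omega
        · have hmem : order c ∈ l.map order := List.mem_map.2 ⟨c, hc, rfl⟩
          have := List.single_le_sum (fun (x : ℕ) _ => Nat.zero_le x) _ hmem
          rw [order_node] at h6
          omega
      have key : ∀ (a : List RTree), (∀ c ∈ a, sizeOf c < n ∧ order c ≤ 5) →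
          ∃ m, List.Forall₂ Iso a m ∧ (∀ x ∈ m, ∃ w, (x, w) ∈ C5) := by
        intro a
        induction a with
        | nil => exact fun _ => ⟨[], List.Forall₂.nil, fun x hx => absurd hx (List.not_mem_nil)⟩
        | cons c a' iha =>
          intro h
          obtain ⟨m', hf', hm'⟩ := iha (fun z hz => h z (List.mem_cons_of_mem _ hz))
          have hc := h c (List.mem_cons_self)
          obtain ⟨r, hr, hiso⟩ := ih c hc.1 (hc.2.trans (by norm_num))
          refine ⟨r :: m', List.Forall₂.cons hiso hf', ?_⟩
          intro x hx
          rcases List.mem_cons.1 hx with rfl | hx'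
          · exact ⟨order c, mem_C5_of_LL (order_pos c) hc.2 hr⟩
          · exact hm' x hx'
      obtain ⟨m, hf, hmC⟩ := key l hl
      have hsum_m : (m.map order).sum = (l.map order).sum :=
        (map_order_eq_of_forall₂ hf).symm ▸ rfl
      have hsle : (l.map order).sum ≤ 5 := by rw [order_node] at h6; omega
      obtain ⟨m', hm', hperm⟩ := combos_complete 30 C5 ((l.map order).sum) m
        (by rw [C5_length]; omega) hwC5 hmC (by rw [hsum_m])
      refine ⟨node m', ?_, (iso_node_of_forall₂ hf).trans (iso_of_perm hperm)⟩
      have heq : order (node l) - 1 = (l.map order).sum := by rw [order_node]; omega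
      rw [LL, heq]
      exact List.mem_map.2 ⟨m', hm', rfl⟩

theorem complete {t : RTree} (h : order t = 6) : ∃ r ∈ LL 6, Iso t r := by
  have := complete_aux (sizeOf t + 1) t (Nat.lt_succ_self _) (by omega)
  rwa [h] at this

end RTree

def Slit : List (Multiset (ℕ × ℕ)) := [
  {(5, 0)},
  {(3, 1), (1, 0)},
  {(2, 1), (2, 0)},
  {(2, 1), (0, 1), (1, 0)},
  {(1, 2), (1, 0), (1, 0)},
  {(1, 1), (3, 0)},
  {(1, 1), (1, 1), (1, 0)},
  {(1, 1), (0, 1), (2, 0)},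
  {(1, 1), (0, 1), (0, 1), (1, 0)},
  {(0, 2), (1, 0), (2, 0)},
  {(0, 2), (1, 0), (0, 1), (1, 0)},
  {(0, 1), (4, 0)},
  {(0, 1), (2, 1), (1, 0)},
  {(0, 1), (1, 1), (2, 0)},
  {(0, 1), (1, 1), (0, 1), (1, 0)},
  {(0, 1), (0, 2), (1, 0), (1, 0)},
  {(0, 1), (0, 1), (3, 0)},
  {(0, 1), (0, 1), (1, 1), (1, 0)},
  {(0, 1), (0, 1), (0, 1), (2, 0)},
  {(0, 1), (0, 1), (0, 1), (0, 1), (1, 0)}]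

theorem eLL6 : RTree.LL 6 = ([.node [.node [], .node [], .node [], .node [], .node []], .node [.node [], .node [], .node [], .node [.node []]], .node [.node [], .node [], .node [.node [], .node []]], .node [.node [], .node [], .node [.node [.node []]]], .node [.node [], .node [.node []], .node [.node []]], .node [.node [], .node [.node [], .node [], .node []]], .node [.node [], .node [.node [], .node [.node []]]], .node [.node [], .node [.node [.node [], .node []]]], .node [.node [], .node [.node [.node [.node []]]]], .node [.node [.node []], .node [.node [], .node []]], .node [.node [.node []], .node [.node [.node []]]], .node [.node [.node [], .node [], .node [], .node []]], .node [.node [.node [], .node [], .node [.node []]]], .node [.node [.node [], .node [.node [], .node []]]], .node [.node [.node [], .node [.node [.node []]]]], .node [.node [.node [.node []], .node [.node []]]], .node [.node [.node [.node [], .node [], .node []]]], .node [.node [.node [.node [], .node [.node []]]]], .node [.node [.node [.node [.node [], .node []]]]], .node [.node [.node [.node [.node [.node []]]]]]] : List RTree) := rfl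

theorem stumps_eval : (RTree.LL 6).map RTree.stumps = Slit := by
  rw [eLL6]
  norm_num [RTree.stumps_node, RTree.isLeaf, Slit]
  all_goals decide

/-- The 20 rooted trees of order 6 fall into 15 isomeric classes:
11 singletons, three classes of size 2 and one class of size 3. -/
theorem isomeric_classes_order_six :
    ∃ reps : List RTree, reps.length = 20 ∧
      (∀ t ∈ reps, RTree.order t = 6) ∧
      reps.Pairwise (fun a b => ¬ RTree.Iso a b) ∧
      (∀ t : RTree, RTree.order t = 6 → ∃ r ∈ reps, RTree.Iso t r) ∧
      (reps.map RTree.stumps).dedup.length = 15 ∧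
      ((reps.map RTree.stumps).dedup.countP
        (fun m => decide ((reps.map RTree.stumps).count m = 1)) = 11) ∧
      ((reps.map RTree.stumps).dedup.countP
        (fun m => decide ((reps.map RTree.stumps).count m = 2)) = 3) ∧
      ((reps.map RTree.stumps).dedup.countP
        (fun m => decide ((reps.map RTree.stumps).count m = 3)) = 1) := by
  refine ⟨RTree.LL 6, by decide, fun t ht => RTree.ordLL (by norm_num) t ht, RTree.pw6,
    fun t ht => RTree.complete ht, ?_, ?_, ?_, ?_⟩ <;>
  · have hS : (RTree.LL 6).map RTree.stumps = Slit := stumps_eval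
    rw [hS]
    decide
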